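/- Let 0 ≤ ℓ ≤ k ≤ m, let (φ⁰,…,φ^k) ∈ (𝒮(T𝕊^{n−1}))^{k+1}, define ψ^p (0 ≤ p ≤ ℓ) by ψ^p(x,ξ) = |ξ|^{m−2p−1} Σ_{r=0}^p (−1)^{p−r} C(p,r) |ξ|^r ⟨ξ,x⟩^{p−r} φ^r(x − (⟨x,ξ⟩/|ξ|²)ξ, ξ/|ξ|), and suppose g_s ∈ 𝒮(S^{m−s}) (0 ≤ s ≤ ℓ−1) satisfy ψ^p = Σ_{s=0}^p (−1)^s C(p,s) s! J^{p−s} g_s for 0 ≤ p ≤ ℓ−1. Set χ^ℓ = ((−1)^ℓ/ℓ!)(ψ^ℓ − Σ_{s=0}^{ℓ−1} (−1)^s C(ℓ,s) s! J^{ℓ−s} g_s), and define χ̃^ℓ on T𝕊^{n−1} by χ̃^ℓ = ((−1)^ℓ/ℓ!)(φ^ℓ − Σ_{s=0}^{ℓ−1} (−1)^s C(ℓ,s) s! I^{ℓ−s} g_s). Then χ̃^ℓ = χ^ℓ|_{T𝕊^{n−1}}, and for all (x,ξ) ∈ ℝⁿ×(ℝⁿ∖{0}): χ^ℓ(x,ξ)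 = |ξ|^{m−ℓ−1} χ̃^ℓ(x − (⟨x,ξ⟩/|ξ|²)ξ, ξ/|ξ|). -/

import Mathlib

noncomputable section

open MeasureTheory Filter
open scoped RealInnerProductSpace BigOperators

/-- `ℝⁿ` with the Euclidean structure. -/
abbrev En (n : ℕ) := EuclideanSpace ℝ (Fin n)

/-- A symmetric `m`-tensor on `ℝⁿ` (pointwise): a family of reals indexed by
`(i₁,…,i_m)`, invariant under permutations of the indices. -/
def IsSymTensor {n m : ℕ} (F : (Fin m → Fin n) → ℝ) : Prop :=
  ∀ (π : Equiv.Perm (Fin m)) (i : Fin m → Fin n), F (i ∘ π) = F i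

/-- A symmetric `m`-tensor field on `ℝⁿ`. -/
def IsSymField {n m : ℕ} (f : (Fin m → Fin n) → En n → ℝ) : Prop :=
  ∀ (π : Equiv.Perm (Fin m)) (i : Fin m → Fin n), f (i ∘ π) = f i

/-- All components of the field are Schwartz functions. -/
def IsSchwartzField {n m : ℕ} (f : (Fin m → Fin n) → En n → ℝ) : Prop :=
  ∀ i, ∃ φ : SchwartzMap (En n) ℝ, ⇑φ = f i

/-- Symmetrization `σ` of a tensor: average over all permutations of the indices. -/
def symz {n m : ℕ} {α : Type*} [AddCommMonoid α] [Module ℝ α]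
    (F : (Fin m → Fin n) → α) : (Fin m → Fin n) → α :=
  fun i => ((m.factorial : ℝ))⁻¹ • ∑ π : Equiv.Perm (Fin m), F (i ∘ π)

/-- The `q`-th momentum ray transform
`(J^q f)(x,ξ) = ∫ t^q f_{i₁…i_m}(x+tξ) ξ^{i₁}⋯ξ^{i_m} dt`, as a function on all of
`ℝⁿ × ℝⁿ`; its restriction to `TSⁿ⁻¹ = {|ξ|=1, ⟨x,ξ⟩=0}` is `I^q f`. -/
def momRT {n m : ℕ} (q : ℕ) (f : (Fin m → Fin n) → En n → ℝ) (x ξ : En n) : ℝ :=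
  ∫ t : ℝ, t ^ q * ∑ i : Fin m → Fin n, f i (x + t • ξ) * ∏ r, ξ (i r)

/-- Coordinate partial derivative `∂/∂x^j`. -/
def pd {n : ℕ} (j : Fin n) (u : En n → ℝ) : En n → ℝ :=
  fun x => fderiv ℝ u x (EuclideanSpace.single j 1)

/-- Inner differentiation (symmetrized derivative) `d`. -/
def dsym {n m : ℕ} (u : (Fin m → Fin n) → En n → ℝ) :
    (Fin (m + 1) → Fin n) → En n → ℝ :=
  symz (fun i => pd (i (Fin.last m)) (u (fun s => i s.castSucc)))

/-- Iterated inner differentiation `d^k`. -/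
def dpow {n m : ℕ} : (k : ℕ) → ((Fin m → Fin n) → En n → ℝ) →
    (Fin (m + k) → Fin n) → En n → ℝ
  | 0, u => u
  | k + 1, u => dsym (dpow k u)

/-- Divergence `δ`. -/
def divg {n m : ℕ} (u : (Fin (m + 1) → Fin n) → En n → ℝ) :
    (Fin m → Fin n) → En n → ℝ :=
  fun i x => ∑ j : Fin n, pd j (u (Fin.snoc i j)) x

/-- Iterated divergence `δ^k`. -/
def divpow {n : ℕ} : (k : ℕ) → {p : ℕ} → ((Fin (p + k) → Fin n) → En n → ℝ) →
    (Fin p → Fin n) → En n → ℝ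
  | 0, _, u => u
  | k + 1, _, u => divpow k (divg u)

/-- Partial derivative `∂/∂x^j` in the first slot of a function of `(x, ξ)`. -/
def pdx {n : ℕ} (j : Fin n) (F : En n → En n → ℝ) : En n → En n → ℝ :=
  fun x ξ => fderiv ℝ (fun x' => F x' ξ) x (EuclideanSpace.single j 1)

/-- Partial derivative `∂/∂ξ^j` in the second slot of a function of `(x, ξ)`. -/
def pdxi {n : ℕ} (j : Fin n) (F : En n → En n → ℝ) : En n → En n → ℝ :=
  fun x ξ => fderiv ℝ (fun ξ' => F x ξ') ξ (EuclideanSpace.single j 1)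

/-- Iterated `∂x` derivatives along a list of indices. -/
def pdxList {n : ℕ} (l : List (Fin n)) (F : En n → En n → ℝ) : En n → En n → ℝ :=
  l.foldr pdx F

/-- Iterated `∂ξ` derivatives along a list of indices. -/
def pdxiList {n : ℕ} (l : List (Fin n)) (F : En n → En n → ℝ) : En n → En n → ℝ :=
  l.foldr pdxi F

/-- The John operator `J_{ij} = ∂²/∂x^i∂ξ^j − ∂²/∂x^j∂ξ^i`. -/
def johnOp {n : ℕ} (i j : Fin n) (F : En n → En n → ℝ) : En n → En n → ℝ :=
  fun x ξ => pdx i (pdxi j F) x ξ - pdx j (pdxi i F) x ξ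

/-- Iterated John operators `J_{i₁j₁} ⋯ J_{i_r j_r}`. -/
def johnIter {n : ℕ} (l : List (Fin n × Fin n)) (F : En n → En n → ℝ) : En n → En n → ℝ :=
  l.foldr (fun ij G => johnOp ij.1 ij.2 G) F

/-- Sharafutdinov's Schwartz space `𝒮(TSⁿ⁻¹)`: a function on
`TSⁿ⁻¹ = {(x,ξ) : |ξ|=1, ⟨x,ξ⟩=0}` is Schwartz iff it is the restriction of a
Schwartz function on `ℝⁿ × ℝⁿ`. -/
def IsSchwartzOnTS {n : ℕ} (φ : En n → En n → ℝ) : Prop :=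
  ∃ Φ : SchwartzMap (En n × En n) ℝ, ∀ x ξ : En n, ‖ξ‖ = 1 → ⟪x, ξ⟫ = 0 → φ x ξ = Φ (x, ξ)

/-- Symmetric multiplication `i_{x^{⊗k}} : S^m → S^{m+k}`. -/
def iPowTens {n m k : ℕ} (x : En n) (V : (Fin m → Fin n) → ℝ) :
    (Fin (m + k) → Fin n) → ℝ :=
  symz (fun i => (∏ r : Fin k, x (i (Fin.natAdd m r))) * V (fun s => i (Fin.castAdd k s)))

/-- Convolution (contraction) `j_{x^{⊗k}} : S^{m+k} → S^m`. -/
def jPowTens {n m k : ℕ} (x : En n) (F : (Fin (m + k) → Fin n) → ℝ) :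
    (Fin m → Fin n) → ℝ :=
  fun i => ∑ j : Fin k → Fin n, (∏ r, x (j r)) * F (Fin.append i j)

/-!
Write `ξ = |ξ| ξ'` and `x = x' + c ξ'` with `(x', ξ') ∈ T𝕊ⁿ⁻¹` and `c = ⟨x, ξ⟩ / |ξ|`. For a
Schwartz `μ`-tensor field `f`, rescaling and shifting the line parameter gives
`J^q f (x, ξ) = |ξ|^(μ-q-1) Σⱼ C(q,j) (-c)^(q-j) I^j f (x', ξ')`, the same binomial shift by `-c`
through which `ψ^p` is built from the `φ^r`. On `T𝕊ⁿ⁻¹` the shift is trivial, so `ψ^p = φ^p`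
there and the hypotheses become `φ^r = Σₛ (-1)^s C(r,s) s! I^(r-s) g_s` for `r < ℓ`. Since
`C(ℓ,r) C(r,s) = C(ℓ,s) C(ℓ-s,r-s)`, the shifted terms of `ψ^ℓ` of order `r < ℓ` cancel against
the shifted lower terms of the `J^(ℓ-s) g_s`, leaving `|ξ|^(m-ℓ-1) χ̃^ℓ(x', ξ')`.
-/

open Finset

theorem SchwartzMap.integrable_pow_mul_comp_add_smul {E : Type*} [NormedAddCommGroup E]
    [NormedSpace ℝ E] (Φ : SchwartzMap E ℝ) (x : E) {v : E} (hv : v ≠ 0) (j : ℕ) :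
    Integrable (fun t : ℝ => t ^ j * Φ (x + t • v)) := by
  have hv' : ‖v‖ ≠ 0 := norm_ne_zero_iff.mpr hv
  have hline : AntilipschitzWith ‖v‖₊⁻¹ (ContinuousLinearMap.toSpanSingleton ℝ v) :=
    ContinuousLinearMap.antilipschitz_of_bound _ fun t => by
      simp [norm_smul, mul_comm |t|, inv_mul_cancel_left₀ hv']
  let Ψ : SchwartzMap ℝ ℝ := SchwartzMap.compCLMOfAntilipschitz ℝ
    (ContinuousLinearMap.toSpanSingleton ℝ v).hasTemperateGrowth hline
    (Φ.compSubConstCLM ℝ (-x))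
  refine (Ψ.integrable_pow_mul volume j).mono' (by fun_prop) (.of_forall fun t => le_of_eq ?_)
  simp [Ψ, compSubConstCLM_apply, add_comm x]

section Projection

variable {E : Type*} [NormedAddCommGroup E] [InnerProductSpace ℝ E]

theorem inner_sub_smul_inv_norm_smul_eq_zero (x ξ : E) :
    ⟪x - (⟪x, ξ⟫ / ‖ξ‖ ^ 2) • ξ, ‖ξ‖⁻¹ • ξ⟫ = 0 := by
  rcases eq_or_ne ξ 0 with rfl | hξ
  · simp
  have : ‖ξ‖ ≠ 0 := norm_ne_zero_iff.mpr hξ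
  rw [inner_sub_left, real_inner_smul_right, real_inner_smul_right, real_inner_smul_left,
    real_inner_self_eq_norm_sq]
  field_simp
  ring

theorem sub_smul_add_smul_inv_norm_smul (x ξ : E) :
    x - (⟪x, ξ⟫ / ‖ξ‖ ^ 2) • ξ + (⟪x, ξ⟫ / ‖ξ‖) • (‖ξ‖⁻¹ • ξ) = x := by
  rw [smul_smul, div_mul_eq_mul_div, ← div_eq_mul_inv, div_div, ← sq, sub_add_cancel]

end Projection

/-- If `u j = ∫ t ^ j F t` for all `j`, then `binomShift y u p = ∫ (t + y) ^ p F t`. -/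
def binomShift {R : Type*} [CommSemiring R] (y : R) (u : ℕ → R) (p : ℕ) : R :=
  ∑ j ∈ range (p + 1), (p.choose j : R) * y ^ (p - j) * u j

section BinomShift

variable {R : Type*} [CommRing R]

theorem binomShift_zero_left (u : ℕ → R) (p : ℕ) : binomShift 0 u p = u p := by
  rw [binomShift, sum_range_succ, sum_eq_zero fun j hj => ?_]
  · simp
  · simp [zero_pow (Nat.sub_ne_zero_of_lt (mem_range.mp hj))]

theorem binomShift_eq_sum_range_add (y : R) (u : ℕ → R) (p : ℕ) :
    binomShift y u p = ∑ j ∈ range p, (p.choose j : R) * y ^ (p - j) * u j + u p := by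
  simp [binomShift, sum_range_succ]

theorem sum_range_choose_mul_sum_range_choose (ℓ : ℕ) (y : R) (w : ℕ → ℕ → R) :
    ∑ r ∈ range ℓ, (ℓ.choose r : R) * y ^ (ℓ - r) *
        ∑ s ∈ range (r + 1), (r.choose s : R) * w s (r - s) =
      ∑ s ∈ range ℓ, (ℓ.choose s : R) *
        ∑ j ∈ range (ℓ - s), ((ℓ - s).choose j : R) * y ^ (ℓ - s - j) * w s j := by
  simp_rw [mul_sum]
  rw [← sum_range_diag_flip]
  refine sum_congr rfl fun r _ => sum_congr rfl fun s hs => ?_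
  have hsr : s ≤ r := Nat.lt_succ_iff.mp (mem_range.mp hs)
  have hchoose : (ℓ.choose r : R) * r.choose s = ℓ.choose s * (ℓ - s).choose (r - s) := by
    rw [← Nat.cast_mul, ← Nat.cast_mul, Nat.choose_mul hsr]
  rw [Nat.sub_sub_sub_cancel_right hsr]
  linear_combination y ^ (ℓ - r) * w s (r - s) * hchoose

theorem binomShift_sub_sum_binomShift (ℓ : ℕ) (y : R) (u : ℕ → R) (B : ℕ → ℕ → R)
    (hu : ∀ r < ℓ, u r = ∑ s ∈ range (r + 1),
      (-1) ^ s * (r.choose s : R) * s.factorial * B s (r - s)) :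
    binomShift y u ℓ - ∑ s ∈ range ℓ,
        (-1) ^ s * (ℓ.choose s : R) * s.factorial * binomShift y (B s) (ℓ - s) =
      u ℓ - ∑ s ∈ range ℓ, (-1) ^ s * (ℓ.choose s : R) * s.factorial * B s (ℓ - s) := by
  have key := sum_range_choose_mul_sum_range_choose ℓ y fun s j => (-1) ^ s * s.factorial * B s j
  have hlow : ∑ r ∈ range ℓ, (ℓ.choose r : R) * y ^ (ℓ - r) * u r =
      ∑ r ∈ range ℓ, (ℓ.choose r : R) * y ^ (ℓ - r) *
        ∑ s ∈ range (r + 1), (r.choose s : R) * ((-1) ^ s * s.factorial * B s (r - s)) :=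
    sum_congr rfl fun r hr => by
      rw [hu r (mem_range.mp hr)]
      congr 1
      exact sum_congr rfl fun s _ => by ring
  have hmid : ∑ s ∈ range ℓ, (ℓ.choose s : R) * ∑ j ∈ range (ℓ - s),
        ((ℓ - s).choose j : R) * y ^ (ℓ - s - j) * ((-1) ^ s * s.factorial * B s j) =
      ∑ s ∈ range ℓ, (-1) ^ s * (ℓ.choose s : R) * s.factorial *
        ∑ j ∈ range (ℓ - s), ((ℓ - s).choose j : R) * y ^ (ℓ - s - j) * B s j :=
    sum_congr rfl fun s _ => by
      rw [mul_sum, mul_sum]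
      exact sum_congr rfl fun j _ => by ring
  rw [binomShift_eq_sum_range_add, hlow, key, hmid]
  simp only [binomShift_eq_sum_range_add, mul_add, sum_add_distrib]
  ring

end BinomShift

theorem zpow_mul_sum_eq_zpow_mul_binomShift {K : Type*} [Field K] {a : K} (ha : a ≠ 0) (b : K)
    (M : ℤ) (p : ℕ) (u : ℕ → K) :
    a ^ (M - 2 * p - 1) * ∑ r ∈ range (p + 1),
        (-1) ^ (p - r) * (p.choose r : K) * a ^ r * b ^ (p - r) * u r =
      a ^ (M - p - 1) * binomShift (-(b / a)) u p := by
  rw [binomShift, mul_sum, mul_sum]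
  refine sum_congr rfl fun r hr => ?_
  have hrp : r ≤ p := Nat.lt_succ_iff.mp (mem_range.mp hr)
  have hpow : a ^ (M - 2 * p - 1) * a ^ r * a ^ (p - r) = a ^ (M - p - 1) := by
    rw [mul_assoc, ← pow_add, Nat.add_sub_cancel' hrp, ← zpow_natCast, ← zpow_add₀ ha]
    congr 1
    ring
  rw [neg_pow (b / a), div_pow, ← hpow]
  field_simp

section MomentumRayTransform

variable {n μ : ℕ} {f : (Fin μ → Fin n) → En n → ℝ}

theorem integrable_momRT_integrand (hf : IsSchwartzField f) (x : En n) {ξ : En n} (hξ : ξ ≠ 0)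
    (j : ℕ) : Integrable (fun t : ℝ => t ^ j * ∑ i, f i (x + t • ξ) * ∏ r, ξ (i r)) := by
  simp_rw [mul_sum]
  refine integrable_finsetSum _ fun i _ => ?_
  obtain ⟨Φ, hΦ⟩ := hf i
  simpa only [hΦ, mul_assoc] using (Φ.integrable_pow_mul_comp_add_smul x hξ j).mul_const _

theorem momRT_smul_right (q : ℕ) (f : (Fin μ → Fin n) → En n → ℝ) (x ξ : En n) {a : ℝ}
    (ha : 0 < a) : momRT q f x (a • ξ) = a ^ ((μ : ℤ) - q - 1) * momRT q f x ξ := by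
  set G : ℝ → ℝ := fun u => u ^ q * ∑ i, f i (x + u • ξ) * ∏ r, ξ (i r)
  have hG : ∀ t : ℝ, t ^ q * ∑ i, f i (x + t • a • ξ) * ∏ r, (a • ξ) (i r) =
      a ^ μ * (a⁻¹) ^ q * G (a * t) := fun t => by
    simp only [G, smul_smul, PiLp.smul_apply, smul_eq_mul, prod_mul_distrib, prod_const,
      card_univ, Fintype.card_fin, mul_comm t a, mul_sum, mul_pow]
    refine sum_congr rfl fun i _ => ?_
    rw [inv_pow]
    field_simp
  rw [momRT, momRT, funext hG, integral_const_mul, Measure.integral_comp_mul_left, smul_eq_mul,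
    abs_of_pos (inv_pos.mpr ha), sub_sub, zpow_sub₀ ha.ne', zpow_add_one₀ ha.ne', zpow_natCast,
    zpow_natCast]
  ring

theorem momRT_add_smul_left (hf : IsSchwartzField f) (x : En n) {ξ : En n} (hξ : ξ ≠ 0)
    (c : ℝ) (q : ℕ) :
    momRT q f (x + c • ξ) ξ = binomShift (-c) (fun j => momRT j f x ξ) q := by
  set F : ℝ → ℝ := fun u => ∑ i, f i (x + u • ξ) * ∏ r, ξ (i r)
  have hshift : momRT q f (x + c • ξ) ξ = ∫ u, (u + -c) ^ q * F u := by
    rw [momRT, ← integral_add_right_eq_self (fun u => (u + -c) ^ q * F u) c]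
    congr 1 with t
    simp only [F, add_neg_cancel_right, add_smul, ← add_assoc, add_right_comm x]
  have hexpand : ∀ u, (u + -c) ^ q * F u =
      ∑ j ∈ range (q + 1), (q.choose j : ℝ) * (-c) ^ (q - j) * (u ^ j * F u) := fun u => by
    rw [add_pow, sum_mul]
    exact sum_congr rfl fun j _ => by ring
  rw [hshift, funext hexpand, integral_finsetSum _ fun j _ =>
    (integrable_momRT_integrand hf x hξ j).const_mul _]
  simp only [integral_const_mul]
  rfl

theorem momRT_eq_zpow_mul_binomShift (hf : IsSchwartzField f) (q : ℕ) (x : En n) {ξ : En n}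
    (hξ : ξ ≠ 0) :
    momRT q f x ξ = ‖ξ‖ ^ ((μ : ℤ) - q - 1) * binomShift (-(⟪x, ξ⟫ / ‖ξ‖))
      (fun j => momRT j f (x - (⟪x, ξ⟫ / ‖ξ‖ ^ 2) • ξ) (‖ξ‖⁻¹ • ξ)) q := by
  have hξ' : ‖ξ‖⁻¹ • ξ ≠ 0 := smul_ne_zero (inv_ne_zero (norm_ne_zero_iff.mpr hξ)) hξ
  calc momRT q f x ξ
      = momRT q f (x - (⟪x, ξ⟫ / ‖ξ‖ ^ 2) • ξ + (⟪x, ξ⟫ / ‖ξ‖) • (‖ξ‖⁻¹ • ξ))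
          (‖ξ‖ • ‖ξ‖⁻¹ • ξ) := by
        rw [sub_smul_add_smul_inv_norm_smul, smul_inv_smul₀ (norm_ne_zero_iff.mpr hξ)]
    _ = _ := by
      rw [momRT_smul_right _ _ _ _ (norm_pos_iff.mpr hξ), momRT_add_smul_left hf _ hξ']

end MomentumRayTransform

theorem chi_restriction_and_extension_general
    (n m k ℓ : ℕ) (hℓ : ℓ ≤ k) (hkm : k ≤ m)
    (φ : ℕ → En n → En n → ℝ)
    (ψ : ℕ → En n → En n → ℝ)
    (hψ : ∀ p, p ≤ ℓ → ∀ x ξ : En n, ξ ≠ 0 →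
      ψ p x ξ = ‖ξ‖ ^ ((m : ℤ) - 2 * p - 1) *
        ∑ r ∈ Finset.range (p + 1),
          (-1 : ℝ) ^ (p - r) * (p.choose r) * ‖ξ‖ ^ r * (⟪ξ, x⟫ : ℝ) ^ (p - r) *
            φ r (x - ((⟪x, ξ⟫ : ℝ) / ‖ξ‖ ^ 2) • ξ) (‖ξ‖⁻¹ • ξ))
    (g : (s : ℕ) → (Fin (m - s) → Fin n) → En n → ℝ)
    (hg : ∀ s, s < ℓ → IsSchwartzField (g s) ∧ IsSymField (g s))
    (hrel : ∀ p, p < ℓ → ∀ x ξ : En n, ξ ≠ 0 →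
      ψ p x ξ = ∑ s ∈ Finset.range (p + 1),
        (-1 : ℝ) ^ s * (p.choose s) * (s.factorial) * momRT (p - s) (g s) x ξ)
    (χ : En n → En n → ℝ)
    (hχ : ∀ x ξ : En n, χ x ξ = ((-1 : ℝ) ^ ℓ / (ℓ.factorial : ℝ)) *
      (ψ ℓ x ξ - ∑ s ∈ Finset.range ℓ,
        (-1 : ℝ) ^ s * (ℓ.choose s) * (s.factorial) * momRT (ℓ - s) (g s) x ξ))
    (χt : En n → En n → ℝ)
    (hχt : ∀ x ξ : En n, χt x ξ = ((-1 : ℝ) ^ ℓ / (ℓ.factorial : ℝ)) *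
      (φ ℓ x ξ - ∑ s ∈ Finset.range ℓ,
        (-1 : ℝ) ^ s * (ℓ.choose s) * (s.factorial) * momRT (ℓ - s) (g s) x ξ)) :
    (∀ x ξ : En n, ‖ξ‖ = 1 → ⟪x, ξ⟫ = 0 → χt x ξ = χ x ξ) ∧
    (∀ x ξ : En n, ξ ≠ 0 →
      χ x ξ = ‖ξ‖ ^ ((m : ℤ) - ℓ - 1) *
        χt (x - ((⟪x, ξ⟫ : ℝ) / ‖ξ‖ ^ 2) • ξ) (‖ξ‖⁻¹ • ξ)) := by
  have hψ' : ∀ p ≤ ℓ, ∀ x ξ : En n, ξ ≠ 0 → ψ p x ξ = ‖ξ‖ ^ ((m : ℤ) - p - 1) *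
      binomShift (-(⟪x, ξ⟫ / ‖ξ‖)) (fun r => φ r (x - (⟪x, ξ⟫ / ‖ξ‖ ^ 2) • ξ) (‖ξ‖⁻¹ • ξ)) p :=
    fun p hp x ξ hξ => by
      rw [hψ p hp x ξ hξ, real_inner_comm x ξ,
        zpow_mul_sum_eq_zpow_mul_binomShift (norm_ne_zero_iff.mpr hξ)]
  have hres : ∀ p ≤ ℓ, ∀ x ξ : En n, ‖ξ‖ = 1 → ⟪x, ξ⟫ = 0 → ψ p x ξ = φ p x ξ :=
    fun p hp x ξ h1 h2 => by
      rw [hψ' p hp x ξ (norm_ne_zero_iff.mp (h1 ▸ one_ne_zero)), h1, h2]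
      simp [binomShift_zero_left]
  refine ⟨fun x ξ h1 h2 => by rw [hχt, hχ, hres ℓ le_rfl x ξ h1 h2], fun x ξ hξ => ?_⟩
  set x' := x - (⟪x, ξ⟫ / ‖ξ‖ ^ 2) • ξ
  set ξ' := ‖ξ‖⁻¹ • ξ
  have hφ : ∀ r < ℓ, φ r x' ξ' = ∑ s ∈ range (r + 1),
      (-1) ^ s * (r.choose s : ℝ) * s.factorial * momRT (r - s) (g s) x' ξ' := fun r hr => by
    rw [← hres r hr.le _ _ (by simpa using norm_smul_inv_norm (𝕜 := ℝ) hξ)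
      (inner_sub_smul_inv_norm_smul_eq_zero x ξ),
      hrel r hr _ _ (smul_ne_zero (inv_ne_zero (norm_ne_zero_iff.mpr hξ)) hξ)]
  have hJ : ∀ s ∈ range ℓ, (-1) ^ s * (ℓ.choose s : ℝ) * s.factorial * momRT (ℓ - s) (g s) x ξ =
      ‖ξ‖ ^ ((m : ℤ) - ℓ - 1) * ((-1) ^ s * (ℓ.choose s : ℝ) * s.factorial *
        binomShift (-(⟪x, ξ⟫ / ‖ξ‖)) (fun j => momRT j (g s) x' ξ') (ℓ - s)) := fun s hs => by
    have hsℓ := mem_range.mp hs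
    have hdeg : ((m - s : ℕ) : ℤ) - (ℓ - s : ℕ) - 1 = m - ℓ - 1 := by omega
    rw [momRT_eq_zpow_mul_binomShift (hg s hsℓ).1 _ _ hξ, hdeg]
    ring
  rw [hχ, hχt, hψ' ℓ le_rfl x ξ hξ, sum_congr rfl hJ, ← mul_sum, ← mul_sub,
    binomShift_sub_sum_binomShift ℓ _ _ _ hφ]
  ring

/-- the restriction of `χ^ℓ` to `TSⁿ⁻¹` equals
`χ̃^ℓ = ((−1)^ℓ/ℓ!)(φ^ℓ − Σ_{s<ℓ} (−1)^s C(ℓ,s) s! I^{ℓ−s} g_s)`, and `χ^ℓ` is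
recovered from `χ̃^ℓ` by
`χ^ℓ(x,ξ) = |ξ|^{m−ℓ−1} χ̃^ℓ(x − (⟨x,ξ⟩/|ξ|²)ξ, ξ/|ξ|)`. -/
theorem chi_restriction_and_extension
    (n m k ℓ : ℕ) (hℓ : ℓ ≤ k) (hkm : k ≤ m)
    (φ : ℕ → En n → En n → ℝ) (hφ : ∀ r, r ≤ k → IsSchwartzOnTS (φ r))
    (ψ : ℕ → En n → En n → ℝ)
    (hψ : ∀ p, p ≤ ℓ → ∀ x ξ : En n, ξ ≠ 0 →
      ψ p x ξ = ‖ξ‖ ^ ((m : ℤ) - 2 * p - 1) *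
        ∑ r ∈ Finset.range (p + 1),
          (-1 : ℝ) ^ (p - r) * (p.choose r) * ‖ξ‖ ^ r * (⟪ξ, x⟫ : ℝ) ^ (p - r) *
            φ r (x - ((⟪x, ξ⟫ : ℝ) / ‖ξ‖ ^ 2) • ξ) (‖ξ‖⁻¹ • ξ))
    (g : (s : ℕ) → (Fin (m - s) → Fin n) → En n → ℝ)
    (hg : ∀ s, s < ℓ → IsSchwartzField (g s) ∧ IsSymField (g s))
    (hrel : ∀ p, p < ℓ → ∀ x ξ : En n, ξ ≠ 0 →
      ψ p x ξ = ∑ s ∈ Finset.range (p + 1),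
        (-1 : ℝ) ^ s * (p.choose s) * (s.factorial) * momRT (p - s) (g s) x ξ)
    (χ : En n → En n → ℝ)
    (hχ : ∀ x ξ : En n, χ x ξ = ((-1 : ℝ) ^ ℓ / (ℓ.factorial : ℝ)) *
      (ψ ℓ x ξ - ∑ s ∈ Finset.range ℓ,
        (-1 : ℝ) ^ s * (ℓ.choose s) * (s.factorial) * momRT (ℓ - s) (g s) x ξ))
    (χt : En n → En n → ℝ)
    (hχt : ∀ x ξ : En n, χt x ξ = ((-1 : ℝ) ^ ℓ / (ℓ.factorial : ℝ)) *
      (φ ℓ x ξ - ∑ s ∈ Finset.range ℓ,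
        (-1 : ℝ) ^ s * (ℓ.choose s) * (s.factorial) * momRT (ℓ - s) (g s) x ξ)) :
    (∀ x ξ : En n, ‖ξ‖ = 1 → ⟪x, ξ⟫ = 0 → χt x ξ = χ x ξ) ∧
    (∀ x ξ : En n, ξ ≠ 0 →
      χ x ξ = ‖ξ‖ ^ ((m : ℤ) - ℓ - 1) *
        χt (x - ((⟪x, ξ⟫ : ℝ) / ‖ξ‖ ^ 2) • ξ) (‖ξ‖⁻¹ • ξ)) :=
  chi_restriction_and_extension_general n m k ℓ hℓ hkm φ ψ hψ g hg hrel χ hχ χt hχt
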